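/- Let S be a type, f : S ≃ S a bijection, K ⊆ S a set with f(K) = K, and B₀, B₁, B₂, B₃, B₄ ⊆ S sets with K ⊆ B₀ ∪ B₁ ∪ B₂ ∪ B₃ ∪ B₄. Assume that for every z ∈ K: (i) z ∉ B_i ∩ B_j for (i,j) ∈ {(0,1), (0,3), (0,4), (1,2), (1,4), (2,3)}; (ii) if z ∈ B₀ ∪ B₁ then f(z) ∉ B₁ ∪ B₃; (iii) if z ∈ B₂ ∪ B₃ then f(z) ∉ B₀ ∪ B₁; (iv) if z ∈ B₄ then f(z) ∉ B₀ ∪ B₂; (v) if z ∈ B₀ \ B₂ then f(z) ∉ B₄; (vi) if z ∈ B₁ \ B₃ then f(z) ∉ B₄; (vii) if z ∈ B₂ \ (B₀ ∪ B₄) then f(z) ∉ B₂ ∪ B₃; (viii) if z ∈ B₃ \ (B₁ ∪ B₄) then f(z) ∉ B₂ ∪ B₃; (ix) if z ∈ B₄ \ (B₂ ∪ B₃) then f(z) ∉ B₄. Then for every z ∈ K there exists a bi-infinite sequence (i_n)_{n ∈ ℤ} with values in {0,1,2,3,4} such that (i_n, i_{n+1}) ∈ 𝔗⁻ for all n ∈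 ℤ and fⁿ(z) ∈ B_{i_n} for all n ∈ ℤ (where fⁿ denotes the n-th iterate for n ≥ 0 and the |n|-th iterate of the inverse for n < 0). -/

import Mathlib

/-!
Each box condition forbids certain transitions `f z ∈ B v` from `z ∈ B u`; together with the
covering they say that whenever `f w ∈ B v` for `w ∈ K`, the point `w` lies in some box `B u`
with `(u, v) ∈ 𝔗⁻`. Since `K` is invariant, this lets every itinerary of the orbit of `z` be
extended one step into the past, so arbitrarily long finite admissible itineraries exist. By
compactness of `ℤ → Fin 5` (König's lemma), some itinerary is admissible on all of `ℤ`.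
-/

/-- Admissible transitions `𝔗⁻` for the 5-box system. -/
def TminusFin : Set (Fin 5 × Fin 5) :=
  {(0, 0), (0, 2), (1, 0), (1, 2), (2, 4), (3, 4), (4, 1), (4, 3)}

theorem exists_path_of_forall_window {α : Type*} [Finite α] {Q : ℤ → α → α → Prop}
    (h : ∀ a b : ℤ, ∃ j : ℤ → α, ∀ n, a ≤ n → n < b → Q n (j n) (j (n + 1))) :
    ∃ i : ℤ → α, ∀ n, Q n (i n) (i (n + 1)) := by
  let _ : TopologicalSpace α := ⊥
  have _ : DiscreteTopology α := ⟨rfl⟩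
  have hclosed (n : ℤ) : IsClosed {j : ℤ → α | Q n (j n) (j (n + 1))} :=
    (isClosed_discrete {p : α × α | Q n p.1 p.2}).preimage
      (f := fun j : ℤ → α => (j n, j (n + 1)))
      ((continuous_apply n).prodMk (continuous_apply (n + 1)))
  obtain ⟨i, hi⟩ := CompactSpace.iInter_nonempty hclosed fun s => by
    obtain ⟨a, ha⟩ := s.bddBelow
    obtain ⟨b, hb⟩ := s.bddAbove
    obtain ⟨j, hj⟩ := h a (b + 1)
    exact ⟨j, Set.mem_iInter₂.2 fun n hn => hj n (ha hn) (Int.lt_add_one_iff.2 (hb hn))⟩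
  exact ⟨i, Set.mem_iInter.1 hi⟩

theorem exists_path_Ico_of_backward_step {α : Type*} {P : ℤ → α → Prop} {R : α → α → Prop}
    (hstep : ∀ n b, P (n + 1) b → ∃ a, P n a ∧ R a b) {N : ℤ} (hN : ∃ a, P N a) (a : ℤ) :
    ∃ j : ℤ → α, ∀ n, a ≤ n → n < N → P n (j n) ∧ R (j n) (j (n + 1)) := by
  suffices H : ∀ a ≤ N, ∃ j : ℤ → α, P a (j a) ∧
      ∀ n, a ≤ n → n < N → P n (j n) ∧ R (j n) (j (n + 1)) by
    obtain ⟨j, -, hj⟩ := H (min a N) (min_le_right a N)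
    exact ⟨j, fun n ha hN => hj n (min_le_of_left_le ha) hN⟩
  refine Int.leInductionDown ?_ fun m _ ⟨j, hm, hj⟩ => ?_
  · obtain ⟨v, hv⟩ := hN
    exact ⟨fun _ => v, hv, fun n h h' => absurd h' (not_lt.2 h)⟩
  · obtain ⟨u, hu, huv⟩ := hstep (m - 1) (j m) (by rwa [sub_add_cancel])
    refine ⟨Function.update j (m - 1) u, by simpa using hu, fun n hn hnN => ?_⟩
    rcases hn.eq_or_lt with rfl | hlt
    · simpa [hu, Function.update_of_ne (show m ≠ m - 1 by omega)] using huv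
    · have hne : n ≠ m - 1 := hlt.ne'
      have hne' : n + 1 ≠ m - 1 := by omega
      simpa [Function.update_of_ne hne, Function.update_of_ne hne'] using hj n (by omega) hnN

open scoped Pointwise in
theorem zpow_apply_mem_of_image_eq {S : Type*} {f : Equiv.Perm S} {K : Set S}
    (hK : f '' K = K) (n : ℤ) {z : S} (hz : z ∈ K) : (f ^ n) z ∈ K := by
  have hf : f ∈ MulAction.stabilizer (Equiv.Perm S) K := hK
  rw [← (Subgroup.zpow_mem _ hf n : (f ^ n) • K = K)]
  exact Set.smul_mem_smul_set hz

section BoxSystem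

variable {S : Type*} {f : S → S} {K : Set S} {B : Fin 5 → Set S}

theorem exists_mem_box (hcov : K ⊆ B 0 ∪ B 1 ∪ B 2 ∪ B 3 ∪ B 4) {z : S} (hz : z ∈ K) :
    ∃ v, z ∈ B v := by
  rcases hcov hz with (((h | h) | h) | h) | h <;> exact ⟨_, h⟩

theorem exists_admissible_pred (hcov : K ⊆ B 0 ∪ B 1 ∪ B 2 ∪ B 3 ∪ B 4)
    (hii : ∀ z ∈ K, z ∈ B 0 ∪ B 1 → f z ∉ B 1 ∪ B 3)
    (hiii : ∀ z ∈ K, z ∈ B 2 ∪ B 3 → f z ∉ B 0 ∪ B 1)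
    (hiv : ∀ z ∈ K, z ∈ B 4 → f z ∉ B 0 ∪ B 2)
    (hv : ∀ z ∈ K, z ∈ B 0 \ B 2 → f z ∉ B 4)
    (hvi : ∀ z ∈ K, z ∈ B 1 \ B 3 → f z ∉ B 4)
    (hvii : ∀ z ∈ K, z ∈ B 2 \ (B 0 ∪ B 4) → f z ∉ B 2 ∪ B 3)
    (hviii : ∀ z ∈ K, z ∈ B 3 \ (B 1 ∪ B 4) → f z ∉ B 2 ∪ B 3)
    (hix : ∀ z ∈ K, z ∈ B 4 \ (B 2 ∪ B 3) → f z ∉ B 4) {w : S} (hw : w ∈ K) {v : Fin 5}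
    (hfw : f w ∈ B v) : ∃ u, w ∈ B u ∧ (u, v) ∈ TminusFin := by
  have := hcov hw
  match v with
  | 0 =>
    suffices w ∈ B 0 ∨ w ∈ B 1 by rcases this with h | h <;> exact ⟨_, h, by simp [TminusFin]⟩
    grind
  | 1 => exact ⟨4, by grind, by simp [TminusFin]⟩
  | 2 =>
    suffices w ∈ B 0 ∨ w ∈ B 1 by rcases this with h | h <;> exact ⟨_, h, by simp [TminusFin]⟩
    grind
  | 3 => exact ⟨4, by grind, by simp [TminusFin]⟩
  | 4 =>
    suffices w ∈ B 2 ∨ w ∈ B 3 by rcases this with h | h <;> exact ⟨_, h, by simp [TminusFin]⟩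
    grind

end BoxSystem

theorem biinfinite_itinerary_minus_general {S : Type*} (f : Equiv.Perm S) (K : Set S)
    (B : Fin 5 → Set S)
    (hK : (⇑f) '' K = K)
    (hcov : K ⊆ B 0 ∪ B 1 ∪ B 2 ∪ B 3 ∪ B 4)
    (hii : ∀ z ∈ K, z ∈ B 0 ∪ B 1 → f z ∉ B 1 ∪ B 3)
    (hiii : ∀ z ∈ K, z ∈ B 2 ∪ B 3 → f z ∉ B 0 ∪ B 1)
    (hiv : ∀ z ∈ K, z ∈ B 4 → f z ∉ B 0 ∪ B 2)
    (hv : ∀ z ∈ K, z ∈ B 0 \ B 2 → f z ∉ B 4)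
    (hvi : ∀ z ∈ K, z ∈ B 1 \ B 3 → f z ∉ B 4)
    (hvii : ∀ z ∈ K, z ∈ B 2 \ (B 0 ∪ B 4) → f z ∉ B 2 ∪ B 3)
    (hviii : ∀ z ∈ K, z ∈ B 3 \ (B 1 ∪ B 4) → f z ∉ B 2 ∪ B 3)
    (hix : ∀ z ∈ K, z ∈ B 4 \ (B 2 ∪ B 3) → f z ∉ B 4) :
    ∀ z ∈ K, ∃ i : ℤ → Fin 5,
      (∀ n : ℤ, (i n, i (n + 1)) ∈ TminusFin) ∧
      (∀ n : ℤ, (f ^ n) z ∈ B (i n)) := by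
  intro z hz
  have horbit (n : ℤ) : (f ^ n) z ∈ K := zpow_apply_mem_of_image_eq hK n hz
  have hstep (n : ℤ) (v : Fin 5) (hnext : (f ^ (n + 1)) z ∈ B v) :
      ∃ u, (f ^ n) z ∈ B u ∧ (u, v) ∈ TminusFin := by
    rw [add_comm, zpow_one_add, Equiv.Perm.mul_apply] at hnext
    exact exists_admissible_pred hcov hii hiii hiv hv hvi hvii hviii hix (horbit n) hnext
  have hwindow (a b : ℤ) : ∃ j : ℤ → Fin 5, ∀ n, a ≤ n → n < b →
      (f ^ n) z ∈ B (j n) ∧ (j n, j (n + 1)) ∈ TminusFin :=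
    exists_path_Ico_of_backward_step (P := fun n v => (f ^ n) z ∈ B v)
      (R := fun u v => (u, v) ∈ TminusFin) hstep (exists_mem_box hcov (horbit b)) a
  obtain ⟨i, hi⟩ := exists_path_of_forall_window
    (Q := fun n u v => (f ^ n) z ∈ B u ∧ (u, v) ∈ TminusFin) hwindow
  exact ⟨i, fun n => (hi n).2, fun n => (hi n).1⟩

/-- Under the hypotheses of Numerical Check B′, every point of the invariant set `K`
admits a bi-infinite itinerary through the boxes that is admissible with respect to
`𝔗⁻` (Proposition 3.4 of the paper, abstract form). -/
theorem biinfinite_itinerary_minus {S : Type*} (f : Equiv.Perm S) (K : Set S)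
    (B : Fin 5 → Set S)
    (hK : (⇑f) '' K = K)
    (hcov : K ⊆ B 0 ∪ B 1 ∪ B 2 ∪ B 3 ∪ B 4)
    (hi : ∀ z ∈ K, z ∉ B 0 ∩ B 1 ∧ z ∉ B 0 ∩ B 3 ∧ z ∉ B 0 ∩ B 4 ∧
      z ∉ B 1 ∩ B 2 ∧ z ∉ B 1 ∩ B 4 ∧ z ∉ B 2 ∩ B 3)
    (hii : ∀ z ∈ K, z ∈ B 0 ∪ B 1 → f z ∉ B 1 ∪ B 3)
    (hiii : ∀ z ∈ K, z ∈ B 2 ∪ B 3 → f z ∉ B 0 ∪ B 1)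
    (hiv : ∀ z ∈ K, z ∈ B 4 → f z ∉ B 0 ∪ B 2)
    (hv : ∀ z ∈ K, z ∈ B 0 \ B 2 → f z ∉ B 4)
    (hvi : ∀ z ∈ K, z ∈ B 1 \ B 3 → f z ∉ B 4)
    (hvii : ∀ z ∈ K, z ∈ B 2 \ (B 0 ∪ B 4) → f z ∉ B 2 ∪ B 3)
    (hviii : ∀ z ∈ K, z ∈ B 3 \ (B 1 ∪ B 4) → f z ∉ B 2 ∪ B 3)
    (hix : ∀ z ∈ K, z ∈ B 4 \ (B 2 ∪ B 3) → f z ∉ B 4) :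
    ∀ z ∈ K, ∃ i : ℤ → Fin 5,
      (∀ n : ℤ, (i n, i (n + 1)) ∈ TminusFin) ∧
      (∀ n : ℤ, (f ^ n) z ∈ B (i n)) :=
  biinfinite_itinerary_minus_general f K B hK hcov hii hiii hiv hv hvi hvii hviii hix
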